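/- arXiv:2511.10517 — 4 statements merged into one kernel-verified Lean document; each statement's English description precedes it below -/
import Mathlib

section
/- Assume in addition that |C(t,μ) − C(t,ν)| ≤ L·d_Pr(μ,ν) for all t ≤ T and all finite nonnegative Borel measures μ,ν on [0,∞). Then for all u, u' ∈ M and all t ∈ [0,T]: ‖K_t[u] − K_t[u']‖₁ ≤ T·‖τ‖_∞·(2rL + 1)·sup_{s≤T} ‖u_s − u'_s‖₁. In particular, if T·‖τ‖_∞·(2rL + 1) < 1, the map K is a strict contraction on M for the distance d(u,u') = sup_{s≤T} ‖u_s − u'_s‖₁. -/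
open MeasureTheory Set Filter

/-- The finite measure on `[0,∞)` with Lebesgue density `f`. -/
noncomputable def densMeasure (f : ℝ → ℝ) : Measure ℝ :=
  (volume.restrict (Ici 0)).withDensity fun a => ENNReal.ofReal (f a)

/-- The `L¹([0,∞))`-norm of a function. -/
noncomputable def L1norm (f : ℝ → ℝ) : ℝ := ∫ a in Ici (0 : ℝ), |f a|

/-- `C` is Lipschitz in its measure argument, with constant `L`, uniformly over times in
`[0, T]`, with respect to the Lévy–Prokhorov distance on the finite nonnegative Borel
measures supported on `[0, ∞)`. -/
def ProkhorovLipschitz (C : ℝ → Measure ℝ → ℝ) (L T : ℝ) : Prop :=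
  ∀ t ∈ Icc (0 : ℝ) T, ∀ μ ν : Measure ℝ, IsFiniteMeasure μ → IsFiniteMeasure ν →
    μ (Iio 0) = 0 → ν (Iio 0) = 0 →
    |C t μ - C t ν| ≤ L * levyProkhorovDist μ ν

/-- `C` is (jointly) continuous on `[0,∞) × M([0,∞))`, where the space of finite
nonnegative measures on `[0,∞)` carries the weak topology, metrized by the
Lévy–Prokhorov distance. -/
def ProkhorovContinuous (C : ℝ → Measure ℝ → ℝ) : Prop :=
  ∀ t ∈ Ici (0 : ℝ), ∀ μ : Measure ℝ, IsFiniteMeasure μ → μ (Iio 0) = 0 →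
    ∀ ε > (0 : ℝ), ∃ δ > (0 : ℝ), ∀ s ∈ Ici (0 : ℝ), ∀ ν : Measure ℝ,
      IsFiniteMeasure ν → ν (Iio 0) = 0 →
      |s - t| < δ → levyProkhorovDist μ ν < δ → |C s ν - C t μ| < ε

/-- `u = (u_t)_{t ∈ I}` is a solution of the nonlinear renewal equation with initial
condition `g`, for times in the set `I`: each `u_t` is nonnegative and in `L¹([0,∞))`,
`u_t(a) = C(t-a, u_{t-a}) ∫₀^∞ u_{t-a}(s) τ(s) ds` for a.e. `a ∈ [0,t)`, and
`u_t(a) = g(a-t)` for a.e. `a ≥ t`. -/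
def IsRenewalSolutionOn (τ : ℝ → ℝ) (C : ℝ → Measure ℝ → ℝ) (g : ℝ → ℝ)
    (u : ℝ → ℝ → ℝ) (I : Set ℝ) : Prop :=
  ∀ t ∈ I,
    Integrable (u t) (volume.restrict (Ici 0)) ∧
    (∀ᵐ a ∂(volume.restrict (Ici (0 : ℝ))), 0 ≤ u t a) ∧
    (∀ᵐ a ∂(volume.restrict (Ico (0 : ℝ) t)),
      u t a = C (t - a) (densMeasure (u (t - a))) * ∫ z in Ici (0 : ℝ), u (t - a) z * τ z) ∧
    (∀ᵐ a ∂(volume.restrict (Ici t)), u t a = g (a - t))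

/-- The set `M` of candidate solutions on `[0,T]`: continuous maps from `[0,T]` to
`L¹([0,∞))`, with `u_t` nonnegative a.e., `sup_{t ≤ T} ‖u_t‖₁ ≤ 2r`, and `u_0 = g`. -/
def MemM (g : ℝ → ℝ) (u : ℝ → ℝ → ℝ) (T r : ℝ) : Prop :=
  (∀ t ∈ Icc (0 : ℝ) T,
      Integrable (u t) (volume.restrict (Ici 0)) ∧
      (∀ᵐ a ∂(volume.restrict (Ici (0 : ℝ))), 0 ≤ u t a) ∧
      L1norm (u t) ≤ 2 * r) ∧
  (∀ t ∈ Icc (0 : ℝ) T, ∀ ε > (0 : ℝ), ∃ δ > (0 : ℝ), ∀ s ∈ Icc (0 : ℝ) T,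
      |s - t| < δ → L1norm (fun a => u s a - u t a) < ε) ∧
  u 0 =ᵐ[volume.restrict (Ici (0 : ℝ))] g

/-- The fixed-point map `K`: `K_t[u](a) = C(t-a, u_{t-a})·∫₀^∞ u_{t-a}(s) τ(s) ds` for
`a ∈ [0,t)`, and `K_t[u](a) = g(a-t)` for `a ≥ t`. -/
noncomputable def Kmap (τ : ℝ → ℝ) (C : ℝ → Measure ℝ → ℝ) (g : ℝ → ℝ)
    (u : ℝ → ℝ → ℝ) (t : ℝ) : ℝ → ℝ :=
  fun a =>
    if a < t then C (t - a) (densMeasure (u (t - a))) * ∫ z in Ici (0 : ℝ), u (t - a) z * τ z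
    else g (a - t)

/-! For `a ≥ t` both `K_t[u](a)` and `K_t[u'](a)` equal `g(a - t)`. For `a < t`, with
`s = t - a`, write `C u ∫ uτ - C u' ∫ u'τ = C u (∫ uτ - ∫ u'τ) + (C u - C u') ∫ u'τ`: since
`C ≤ 1` the first term is at most `‖τ‖_∞ ‖u_s - u'_s‖₁`, and since `‖u'_s‖₁ ≤ 2r` the second is
at most `2r ‖τ‖_∞ L d_Pr(u_s, u'_s)`. The density measures of `u_s` and `u'_s` give masses to any
set that differ by at most `‖u_s - u'_s‖₁`, so their Lévy–Prokhorov distance is at most that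
`L¹` distance. Integrating the pointwise bound over `a ∈ [0, t)` yields the factor `t ≤ T`. -/

lemma L1norm_nonneg (f : ℝ → ℝ) : 0 ≤ L1norm f :=
  integral_nonneg fun _ => abs_nonneg _

lemma L1norm_sub_comm (f h : ℝ → ℝ) :
    L1norm (fun a => f a - h a) = L1norm (fun a => h a - f a) := by
  simp only [L1norm, abs_sub_comm]

lemma L1norm_sub_le {f h : ℝ → ℝ} (hf : Integrable f (volume.restrict (Ici 0)))
    (hh : Integrable h (volume.restrict (Ici 0))) :
    L1norm (fun a => f a - h a) ≤ L1norm f + L1norm h := by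
  rw [L1norm, L1norm, L1norm, ← integral_add hf.abs hh.abs]
  exact integral_mono (hf.sub hh).abs (hf.abs.add hh.abs) fun a => abs_sub _ _

lemma L1norm_le_mul_of_abs_le {f : ℝ → ℝ} {t c : ℝ} (ht : 0 ≤ t)
    (hlt : ∀ a ∈ Ico 0 t, |f a| ≤ c) (hge : ∀ a, t ≤ a → f a = 0) :
    L1norm f ≤ t * c := by
  have hbound : ∀ a ∈ Ici (0 : ℝ), |f a| ≤ (Ico 0 t).indicator (fun _ => c) a := by
    intro a ha
    by_cases hat : a < t
    · rw [indicator_of_mem (show a ∈ Ico 0 t from ⟨ha, hat⟩)]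
      exact hlt a ⟨ha, hat⟩
    · rw [indicator_of_notMem fun h => hat h.2, hge a (not_lt.mp hat), abs_zero]
  calc L1norm f ≤ ∫ a in Ici 0, (Ico 0 t).indicator (fun _ => c) a := by
        refine integral_mono_of_nonneg (.of_forall fun _ => abs_nonneg _) ?_
          ((ae_restrict_mem measurableSet_Ici).mono hbound)
        exact (integrable_indicator_iff measurableSet_Ico).mpr
          ((integrableOn_const_iff (by finiteness)).mpr
            (Or.inr ((Measure.restrict_apply_le _ _).trans_lt measure_Ico_lt_top)))
    _ = t * c := by
        rw [integral_indicator measurableSet_Ico, setIntegral_const,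
          measureReal_restrict_apply measurableSet_Ico, inter_eq_left.mpr Ico_subset_Ici_self,
          Real.volume_real_Ico, smul_eq_mul, sub_zero, max_eq_left ht]

lemma levyProkhorovEDist_le_of_forall_le_add {Ω : Type*} [MeasurableSpace Ω]
    [PseudoEMetricSpace Ω] {μ ν : Measure Ω} {δ : ENNReal}
    (hμν : ∀ E, MeasurableSet E → μ E ≤ ν E + δ) (hνμ : ∀ E, MeasurableSet E → ν E ≤ μ E + δ) :
    levyProkhorovEDist μ ν ≤ δ := by
  refine levyProkhorovEDist_le_of_forall μ ν δ fun ε E hδε hε hE => ?_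
  have hE_sub : E ⊆ Metric.thickening ε.toReal E :=
    Metric.self_subset_thickening (ENNReal.toReal_pos (pos_of_gt hδε).ne' hε.ne) E
  exact ⟨(hμν E hE).trans (add_le_add (measure_mono hE_sub) hδε.le),
    (hνμ E hE).trans (add_le_add (measure_mono hE_sub) hδε.le)⟩

lemma isFiniteMeasure_densMeasure {f : ℝ → ℝ} (hf : Integrable f (volume.restrict (Ici 0))) :
    IsFiniteMeasure (densMeasure f) := by
  constructor
  rw [densMeasure, withDensity_apply _ MeasurableSet.univ, Measure.restrict_univ]
  exact hf.lintegral_lt_top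

lemma densMeasure_Iio (f : ℝ → ℝ) : densMeasure f (Iio 0) = 0 := by
  rw [densMeasure, withDensity_apply _ measurableSet_Iio,
    Measure.restrict_restrict measurableSet_Iio, Iio_inter_Ici, Ico_self, Measure.restrict_empty,
    lintegral_zero_measure]

lemma densMeasure_le_add_L1norm {f h : ℝ → ℝ} (hf : Integrable f (volume.restrict (Ici 0)))
    (hh : Integrable h (volume.restrict (Ici 0))) {E : Set ℝ} (hE : MeasurableSet E) :
    densMeasure f E ≤ densMeasure h E + ENNReal.ofReal (L1norm fun a => f a - h a) := by
  have hfh : Integrable (fun a => |f a - h a|) (volume.restrict (Ici 0)) := (hf.sub hh).abs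
  rw [densMeasure, densMeasure, withDensity_apply _ hE, withDensity_apply _ hE, L1norm,
    ofReal_integral_eq_lintegral_ofReal hfh (.of_forall fun _ => abs_nonneg _)]
  calc ∫⁻ a in E, ENNReal.ofReal (f a) ∂volume.restrict (Ici 0)
      ≤ ∫⁻ a in E, ENNReal.ofReal (h a) + ENNReal.ofReal |f a - h a| ∂volume.restrict (Ici 0) :=
        lintegral_mono fun a =>
          (ENNReal.ofReal_le_ofReal (by linarith [le_abs_self (f a - h a)])).trans
            ENNReal.ofReal_add_le
    _ = (∫⁻ a in E, ENNReal.ofReal (h a) ∂volume.restrict (Ici 0))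
        + ∫⁻ a in E, ENNReal.ofReal |f a - h a| ∂volume.restrict (Ici 0) :=
        lintegral_add_left' hh.aemeasurable.ennreal_ofReal.restrict _
    _ ≤ _ := add_le_add_right (setLIntegral_le_lintegral _ _) _

lemma levyProkhorovDist_densMeasure_le {f h : ℝ → ℝ}
    (hf : Integrable f (volume.restrict (Ici 0))) (hh : Integrable h (volume.restrict (Ici 0))) :
    levyProkhorovDist (densMeasure f) (densMeasure h) ≤ L1norm fun a => f a - h a :=
  ENNReal.toReal_le_of_le_ofReal (L1norm_nonneg _) <|
    levyProkhorovEDist_le_of_forall_le_add (fun _ hE => densMeasure_le_add_L1norm hf hh hE)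
      fun _ hE => L1norm_sub_comm f h ▸ densMeasure_le_add_L1norm hh hf hE

lemma integrable_mul_weight {τ : ℝ → ℝ} {B : ℝ} (hτ : Measurable τ)
    (hτB : ∀ᵐ a ∂volume.restrict (Ici (0 : ℝ)), |τ a| ≤ B)
    {f : ℝ → ℝ} (hf : Integrable f (volume.restrict (Ici 0))) :
    Integrable (fun z => f z * τ z) (volume.restrict (Ici 0)) :=
  hf.mul_bdd hτ.aestronglyMeasurable hτB

lemma abs_integral_mul_weight_le {τ : ℝ → ℝ} {B : ℝ}
    (hτB : ∀ᵐ a ∂volume.restrict (Ici (0 : ℝ)), |τ a| ≤ B)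
    {f : ℝ → ℝ} (hf : Integrable f (volume.restrict (Ici 0))) :
    |∫ z in Ici 0, f z * τ z| ≤ B * L1norm f := by
  calc |∫ z in Ici 0, f z * τ z| ≤ ∫ z in Ici 0, |f z * τ z| := abs_integral_le_integral_abs
    _ ≤ ∫ z in Ici 0, B * |f z| := by
        refine integral_mono_of_nonneg (.of_forall fun _ => abs_nonneg _) (hf.abs.const_mul B) ?_
        filter_upwards [hτB] with z hz
        rw [abs_mul, mul_comm]
        exact mul_le_mul_of_nonneg_right hz (abs_nonneg _)
    _ = B * L1norm f := integral_const_mul B _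

lemma abs_integral_mul_weight_sub_le {τ : ℝ → ℝ} {B : ℝ} (hτ : Measurable τ)
    (hτB : ∀ᵐ a ∂volume.restrict (Ici (0 : ℝ)), |τ a| ≤ B)
    {f h : ℝ → ℝ} (hf : Integrable f (volume.restrict (Ici 0)))
    (hh : Integrable h (volume.restrict (Ici 0))) :
    |(∫ z in Ici 0, f z * τ z) - ∫ z in Ici 0, h z * τ z| ≤ B * L1norm fun z => f z - h z := by
  rw [← integral_sub (integrable_mul_weight hτ hτB hf) (integrable_mul_weight hτ hτB hh)]
  simpa only [sub_mul] using abs_integral_mul_weight_le hτB (f := fun z => f z - h z) (hf.sub hh)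

lemma bddAbove_L1norm_sub_of_memM {g : ℝ → ℝ} {u u' : ℝ → ℝ → ℝ} {T r : ℝ}
    (hu : MemM g u T r) (hu' : MemM g u' T r) :
    BddAbove ((fun s => L1norm fun a => u s a - u' s a) '' Icc 0 T) := by
  refine ⟨2 * r + 2 * r, ?_⟩
  rintro _ ⟨s, hs, rfl⟩
  obtain ⟨hi, -, hb⟩ := hu.1 s hs
  obtain ⟨hi', -, hb'⟩ := hu'.1 s hs
  exact (L1norm_sub_le hi hi').trans (add_le_add hb hb')

lemma abs_mul_sub_mul_le {c c' x x' : ℝ} (hc : |c| ≤ 1) :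
    |c * x - c' * x'| ≤ |x - x'| + |c - c'| * |x'| :=
  calc |c * x - c' * x'| = |c * (x - x') + (c - c') * x'| := by ring_nf
    _ ≤ |c| * |x - x'| + |c - c'| * |x'| := by rw [← abs_mul, ← abs_mul]; exact abs_add_le _ _
    _ ≤ |x - x'| + |c - c'| * |x'| := by
        gcongr
        exact mul_le_of_le_one_left (abs_nonneg _) hc

noncomputable def renewalFlux (τ : ℝ → ℝ) (C : ℝ → Measure ℝ → ℝ) (s : ℝ) (v : ℝ → ℝ) : ℝ :=
  C s (densMeasure v) * ∫ z in Ici 0, v z * τ z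

lemma Kmap_of_lt {τ : ℝ → ℝ} {C : ℝ → Measure ℝ → ℝ} {g : ℝ → ℝ} {u : ℝ → ℝ → ℝ} {t a : ℝ}
    (h : a < t) : Kmap τ C g u t a = renewalFlux τ C (t - a) (u (t - a)) :=
  if_pos h

lemma Kmap_of_le {τ : ℝ → ℝ} {C : ℝ → Measure ℝ → ℝ} {g : ℝ → ℝ} {u : ℝ → ℝ → ℝ} {t a : ℝ}
    (h : t ≤ a) : Kmap τ C g u t a = g (a - t) :=
  if_neg h.not_gt

lemma abs_renewalFlux_sub_le {τ : ℝ → ℝ} {C : ℝ → Measure ℝ → ℝ} {B L T r s : ℝ}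
    (hτ : Measurable τ) (hτB : ∀ᵐ a ∂volume.restrict (Ici (0 : ℝ)), |τ a| ≤ B) (hB : 0 ≤ B)
    (hC1 : ∀ μ, |C s μ| ≤ 1) (hCLip : ProkhorovLipschitz C L T) (hL : 0 ≤ L) (hs : s ∈ Icc 0 T)
    {v w : ℝ → ℝ} (hv : Integrable v (volume.restrict (Ici 0)))
    (hw : Integrable w (volume.restrict (Ici 0))) (hw_le : L1norm w ≤ 2 * r) :
    |renewalFlux τ C s v - renewalFlux τ C s w|
      ≤ B * (2 * r * L + 1) * L1norm fun a => v a - w a := by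
  set d := L1norm fun a => v a - w a
  have hC : |C s (densMeasure v) - C s (densMeasure w)| ≤ L * d :=
    (hCLip s hs _ _ (isFiniteMeasure_densMeasure hv) (isFiniteMeasure_densMeasure hw)
      (densMeasure_Iio v) (densMeasure_Iio w)).trans
      (mul_le_mul_of_nonneg_left (levyProkhorovDist_densMeasure_le hv hw) hL)
  have hI : |∫ z in Ici 0, w z * τ z| ≤ B * (2 * r) :=
    (abs_integral_mul_weight_le hτB hw).trans (mul_le_mul_of_nonneg_left hw_le hB)
  calc _ ≤ _ := abs_mul_sub_mul_le (hC1 _)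
    _ ≤ B * d + L * d * (B * (2 * r)) :=
        add_le_add (abs_integral_mul_weight_sub_le hτ hτB hv hw)
          (mul_le_mul hC hI (abs_nonneg _) (mul_nonneg hL (L1norm_nonneg _)))
    _ = B * (2 * r * L + 1) * d := by ring

theorem Kmap_contraction_general
    (τ : ℝ → ℝ) (hτmeas : Measurable τ) (hτnonneg : ∀ a, 0 ≤ τ a)
    (B : ℝ) (hτB : ∀ᵐ a ∂(volume.restrict (Ici (0 : ℝ))), τ a ≤ B)
    (C : ℝ → Measure ℝ → ℝ)
    (hC01 : ∀ t μ, C t μ ∈ Icc (0 : ℝ) 1)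
    (T r L : ℝ) (hr : 0 < r) (hL : 0 < L)
    (hCLip : ProkhorovLipschitz C L T)
    (g : ℝ → ℝ)
    (u u' : ℝ → ℝ → ℝ) (hu : MemM g u T r) (hu' : MemM g u' T r) :
    ∀ t ∈ Icc (0 : ℝ) T,
      L1norm (fun a => Kmap τ C g u t a - Kmap τ C g u' t a) ≤
        T * B * (2 * r * L + 1) *
          sSup ((fun s => L1norm (fun a => u s a - u' s a)) '' Icc (0 : ℝ) T) := by
  intro t ht
  set S := sSup ((fun s => L1norm (fun a => u s a - u' s a)) '' Icc (0 : ℝ) T)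
  have hτB' : ∀ᵐ a ∂volume.restrict (Ici (0 : ℝ)), |τ a| ≤ B := by
    filter_upwards [hτB] with a ha
    rwa [abs_of_nonneg (hτnonneg a)]
  have hB : 0 ≤ B := by
    have : (ae (volume.restrict (Ici (0 : ℝ)))).NeBot := ae_neBot.2 (by simp)
    obtain ⟨a, ha⟩ := hτB'.exists
    exact (abs_nonneg _).trans ha
  have hC1 : ∀ s μ, |C s μ| ≤ 1 := fun s μ => (abs_of_nonneg (hC01 s μ).1).trans_le (hC01 s μ).2
  have hS : ∀ s ∈ Icc 0 T, L1norm (fun a => u s a - u' s a) ≤ S :=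
    fun s hs => le_csSup (bddAbove_L1norm_sub_of_memM hu hu') ⟨s, hs, rfl⟩
  have hc : 0 ≤ B * (2 * r * L + 1) * S := by
    have := (L1norm_nonneg _).trans (hS t ht)
    positivity
  calc L1norm (fun a => Kmap τ C g u t a - Kmap τ C g u' t a) ≤ t * (B * (2 * r * L + 1) * S) := by
        refine L1norm_le_mul_of_abs_le ht.1 (fun a ha => ?_)
          fun a ha => by rw [Kmap_of_le ha, Kmap_of_le ha, sub_self]
        have hs : t - a ∈ Icc 0 T := ⟨by linarith [ha.2], by linarith [ha.1, ht.2]⟩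
        rw [Kmap_of_lt ha.2, Kmap_of_lt ha.2]
        exact (abs_renewalFlux_sub_le hτmeas hτB' hB (hC1 _) hCLip hL.le hs (hu.1 _ hs).1
          (hu'.1 _ hs).1 (hu'.1 _ hs).2.2).trans
          (mul_le_mul_of_nonneg_left (hS _ hs) (by positivity))
    _ ≤ T * B * (2 * r * L + 1) * S := by
        simpa only [mul_assoc] using mul_le_mul_of_nonneg_right ht.2 hc

/-- If moreover `C` is `L`-Lipschitz in its measure argument (w.r.t.
the Prokhorov distance) uniformly for `t ≤ T`, then for all `u, u' ∈ M` and `t ∈ [0,T]`,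
`‖K_t[u] − K_t[u']‖₁ ≤ T·‖τ‖_∞·(2rL + 1)·sup_{s ≤ T} ‖u_s − u'_s‖₁`; in particular, if
`T·‖τ‖_∞·(2rL+1) < 1`, `K` is a strict contraction on `M` for the distance
`d(u,u') = sup_{s ≤ T} ‖u_s − u'_s‖₁`. -/
theorem Kmap_contraction
    (τ : ℝ → ℝ) (hτmeas : Measurable τ) (hτnonneg : ∀ a, 0 ≤ τ a)
    (B : ℝ) (hτB : ∀ᵐ a ∂(volume.restrict (Ici (0 : ℝ))), τ a ≤ B)
    (C : ℝ → Measure ℝ → ℝ)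
    (hC01 : ∀ t μ, C t μ ∈ Icc (0 : ℝ) 1)
    (hCcont : ProkhorovContinuous C)
    (T r L : ℝ) (hT : 0 < T) (hr : 0 < r) (hL : 0 < L)
    (hCLip : ProkhorovLipschitz C L T)
    (g : ℝ → ℝ) (hg : Integrable g (volume.restrict (Ici 0)))
    (hgnonneg : ∀ᵐ a ∂(volume.restrict (Ici (0 : ℝ))), 0 ≤ g a)
    (u u' : ℝ → ℝ → ℝ) (hu : MemM g u T r) (hu' : MemM g u' T r) :
    ∀ t ∈ Icc (0 : ℝ) T,
      L1norm (fun a => Kmap τ C g u t a - Kmap τ C g u' t a) ≤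
        T * B * (2 * r * L + 1) *
          sSup ((fun s => L1norm (fun a => u s a - u' s a)) '' Icc (0 : ℝ) T) :=
  Kmap_contraction_general τ hτmeas hτnonneg B hτB C hC01 T r L hr hL hCLip g u u' hu hu'
end

section
/- Every solution (u_t)_{t≥0} of the nonlinear renewal equation with nonnegative initial condition g ∈ L¹([0,∞)) satisfies the a priori bound ‖u_t‖₁ ≤ ‖g‖₁ · e^{‖τ‖_∞ t} for every t ≥ 0. -/
open MeasureTheory Set Filter

lemma shift_Ico (G : ℝ → ℝ) (c p q : ℝ) :
    ∫ x in Ico (p + c) (q + c), G (x - c) = ∫ x in Ico p q, G x := by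
  rw [← integral_indicator measurableSet_Ico, ← integral_indicator measurableSet_Ico]
  have h : ∀ x : ℝ, (Ico (p + c) (q + c)).indicator (fun a => G (a - c)) x
      = (Ico p q).indicator G (x - c) := by
    intro x
    by_cases hx : x ∈ Ico (p + c) (q + c)
    · obtain ⟨h1, h2⟩ := mem_Ico.mp hx
      rw [indicator_of_mem hx, indicator_of_mem (mem_Ico.mpr ⟨by linarith, by linarith⟩)]
    · rw [indicator_of_notMem hx, indicator_of_notMem]
      intro h'
      obtain ⟨h1, h2⟩ := mem_Ico.mp h'
      exact hx (mem_Ico.mpr ⟨by linarith, by linarith⟩)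
  simp_rw [h]
  exact integral_sub_right_eq_self ((Ico p q).indicator G) c

lemma shift_Ici (G : ℝ → ℝ) (c p : ℝ) :
    ∫ x in Ici (p + c), G (x - c) = ∫ x in Ici p, G x := by
  rw [← integral_indicator measurableSet_Ici, ← integral_indicator measurableSet_Ici]
  have h : ∀ x : ℝ, (Ici (p + c)).indicator (fun a => G (a - c)) x
      = (Ici p).indicator G (x - c) := by
    intro x
    by_cases hx : x ∈ Ici (p + c)
    · rw [indicator_of_mem hx, indicator_of_mem (by simp only [mem_Ici] at hx ⊢; linarith)]
    · rw [indicator_of_notMem hx, indicator_of_notMem]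
      intro h'
      simp only [mem_Ici] at h' hx
      exact hx (by linarith)
  simp_rw [h]
  exact integral_sub_right_eq_self ((Ici p).indicator G) c


/-- A priori bound: every solution of the nonlinear renewal equation
with nonnegative initial condition `g ∈ L¹([0,∞))` satisfies
`‖u_t‖₁ ≤ ‖g‖₁ · e^{‖τ‖_∞ t}` for every `t ≥ 0`. -/
theorem renewal_solution_apriori_bound
    (τ : ℝ → ℝ) (hτmeas : Measurable τ) (hτnonneg : ∀ a, 0 ≤ τ a)
    (B : ℝ) (hτB : ∀ᵐ a ∂(volume.restrict (Ici (0 : ℝ))), τ a ≤ B)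
    (C : ℝ → Measure ℝ → ℝ)
    (hC01 : ∀ t μ, C t μ ∈ Icc (0 : ℝ) 1)
    (hCcont : ProkhorovContinuous C)
    (g : ℝ → ℝ) (hg : Integrable g (volume.restrict (Ici 0)))
    (hgnonneg : ∀ᵐ a ∂(volume.restrict (Ici (0 : ℝ))), 0 ≤ g a)
    (u : ℝ → ℝ → ℝ) (hu : IsRenewalSolutionOn τ C g u (Ici 0)) :
    ∀ t ≥ (0 : ℝ), L1norm (u t) ≤ L1norm g * Real.exp (B * t) := by
  -- B is nonnegative
  have hne : volume.restrict (Ici (0 : ℝ)) ≠ 0 := by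
    simp [Measure.restrict_eq_zero, Real.volume_Ici]
  have hB : 0 ≤ B := by
    by_contra hBneg
    push_neg at hBneg
    have h1 : ∀ᵐ a ∂(volume.restrict (Ici (0 : ℝ))), False := by
      filter_upwards [hτB] with a ha
      exact absurd ((hτnonneg a).trans ha) (not_le.mpr hBneg)
    haveI := ae_neBot.mpr hne
    obtain ⟨a, ha⟩ := h1.exists
    exact ha
  have hG0 : 0 ≤ L1norm g := integral_nonneg fun a => abs_nonneg _
  -- integrability of u r * τ
  have hint_mul : ∀ r : ℝ, 0 ≤ r →
      Integrable (fun z => u r z * τ z) (volume.restrict (Ici 0)) := by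
    intro r hr
    refine Integrable.mono' ((hu r hr).1.abs.const_mul B)
      ((hu r hr).1.aestronglyMeasurable.mul hτmeas.aestronglyMeasurable) ?_
    filter_upwards [hτB] with z hz
    rw [Real.norm_eq_abs, abs_mul, abs_of_nonneg (hτnonneg z), mul_comm B]
    exact mul_le_mul_of_nonneg_left hz (abs_nonneg _)
  -- nonnegativity of birth integral
  have hh_nonneg : ∀ r : ℝ, 0 ≤ r → 0 ≤ ∫ z in Ici (0 : ℝ), u r z * τ z := by
    intro r hr
    apply integral_nonneg_of_ae
    filter_upwards [(hu r hr).2.1] with z hz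
    exact mul_nonneg hz (hτnonneg z)
  -- bound on birth integral
  have hh_le : ∀ r : ℝ, 0 ≤ r →
      (∫ z in Ici (0 : ℝ), u r z * τ z) ≤ B * L1norm (u r) := by
    intro r hr
    have h1 : (∫ z in Ici (0 : ℝ), u r z * τ z) ≤ ∫ z in Ici (0 : ℝ), B * |u r z| := by
      refine integral_mono_ae (hint_mul r hr) ((hu r hr).1.abs.const_mul B) ?_
      filter_upwards [hτB, (hu r hr).2.1] with z hz hz0
      calc u r z * τ z ≤ u r z * B := mul_le_mul_of_nonneg_left hz hz0
        _ = B * u r z := mul_comm _ _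
        _ ≤ B * |u r z| := mul_le_mul_of_nonneg_left (le_abs_self _) hB
    rw [integral_const_mul] at h1
    exact h1
  -- tail identity
  have htail : ∀ r : ℝ, 0 ≤ r → ∫ a in Ici r, |u r a| = L1norm g := by
    intro r hr
    have h1 : ∀ᵐ a ∂(volume.restrict (Ici r)), |u r a| = |g (a - r)| :=
      (hu r hr).2.2.2.mono fun a ha => by rw [ha]
    rw [integral_congr_ae h1]
    have h2 := shift_Ici (fun b => |g b|) r 0
    rw [zero_add] at h2
    exact h2
  -- splitting identity
  have hsplit : ∀ r : ℝ, 0 ≤ r →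
      L1norm (u r) = (∫ a in Ico 0 r, u r a) + L1norm g := by
    intro r hr
    have hInt : IntegrableOn (fun a => |u r a|) (Ici 0) volume := (hu r hr).1.abs
    have hIco : IntegrableOn (fun a => |u r a|) (Ico 0 r) volume :=
      hInt.mono_set Ico_subset_Ici_self
    have hIci : IntegrableOn (fun a => |u r a|) (Ici r) volume :=
      hInt.mono_set (Ici_subset_Ici.mpr hr)
    have hdisj : Disjoint (Ico (0 : ℝ) r) (Ici r) := by
      rw [Set.disjoint_left]
      intro x hx hx'
      exact absurd hx.2 (not_lt.mpr hx')
    have hsplit1 : L1norm (u r)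
        = (∫ a in Ico 0 r, |u r a|) + ∫ a in Ici r, |u r a| := by
      rw [L1norm, ← setIntegral_union hdisj measurableSet_Ici hIco hIci,
        Ico_union_Ici_eq_Ici hr]
    have habs : ∫ a in Ico 0 r, |u r a| = ∫ a in Ico 0 r, u r a := by
      refine integral_congr_ae ?_
      filter_upwards [ae_restrict_of_ae_restrict_of_subset Ico_subset_Ici_self
        (hu r hr).2.1] with a ha
      exact abs_of_nonneg ha
    rw [hsplit1, habs, htail r hr]
  -- translation identity
  have htrans : ∀ s t : ℝ, 0 ≤ s → s ≤ t →
      ∫ a in Ico (t - s) t, u t a = ∫ a in Ico 0 s, u s a := by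
    intro s t hs hst
    have ht0 : (0 : ℝ) ≤ t := hs.trans hst
    set F : ℝ → ℝ := fun r => C r (densMeasure (u r)) * ∫ z in Ici (0 : ℝ), u r z * τ z
      with hFdef
    have h1 : ∀ᵐ a ∂(volume.restrict (Ico (t - s) t)), u t a = F (t - a) :=
      ae_restrict_of_ae_restrict_of_subset (Ico_subset_Ico_left (by linarith))
        (hu t ht0).2.2.1
    have h2 : ∀ᵐ a ∂(volume.restrict (Ico (0 : ℝ) s)), u s a = F (s - a) :=
      (hu s hs).2.2.1
    rw [integral_congr_ae h1, integral_congr_ae h2]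
    have h3 := shift_Ico (fun b => F (s - b)) (t - s) 0 s
    rw [zero_add] at h3
    have h4 : s + (t - s) = t := by ring
    rw [h4] at h3
    rw [← h3]
    refine setIntegral_congr_fun measurableSet_Ico fun a _ => ?_
    congr 1
    ring
  -- main argument
  intro t ht
  set G := L1norm g with hGdef
  set U : ℝ → ℝ := (Ici (0 : ℝ)).indicator (u t) with hUdef
  have hUint : Integrable U volume :=
    (integrable_indicator_iff measurableSet_Ici).mpr (hu t ht).1
  set φ : ℝ → ℝ := fun r => G + ∫ x in (t - r)..t, U x with hφdef
  have hφcont : Continuous φ := by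
    have hc : Continuous fun y => ∫ x in t..y, U x :=
      intervalIntegral.continuous_primitive (fun a b => hUint.intervalIntegrable) t
    have : Continuous fun r : ℝ => ∫ x in (t - r)..t, U x := by
      have h5 : (fun r : ℝ => ∫ x in (t - r)..t, U x)
          = fun r : ℝ => -∫ x in t..(t - r), U x := by
        funext r
        rw [← intervalIntegral.integral_symm]
      rw [h5]
      exact (hc.comp (continuous_const.sub continuous_id)).neg
    exact continuous_const.add this
  -- key identity
  have hkey : ∀ r ∈ Icc (0 : ℝ) t, L1norm (u r) = φ r := by
    rintro r ⟨hr0, hrt⟩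
    have htr0 : 0 ≤ t - r := by linarith
    have htrt : t - r ≤ t := by linarith
    have hw : ∫ x in (t - r)..t, U x = ∫ a in Ico (t - r) t, u t a := by
      rw [intervalIntegral.integral_of_le htrt, integral_Ioc_eq_integral_Ioo,
        ← integral_Ico_eq_integral_Ioo]
      refine setIntegral_congr_fun measurableSet_Ico fun a ha => ?_
      exact indicator_of_mem (by exact le_trans htr0 ha.1) (u t)
    rw [hsplit r hr0, hφdef]
    simp only []
    rw [hw, htrans r t hr0 hrt]
    ring
  have hφnonneg : ∀ r ∈ Icc (0 : ℝ) t, 0 ≤ φ r := by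
    intro r hr
    rw [← hkey r hr]
    exact integral_nonneg fun a => abs_nonneg _
  set F : ℝ → ℝ := fun y => ∫ r in (0 : ℝ)..y, φ r with hFdef
  have hFderiv : ∀ y : ℝ, HasDerivAt F (φ y) y := fun y =>
    intervalIntegral.integral_hasDerivAt_right (hφcont.intervalIntegrable _ _)
      (hφcont.stronglyMeasurableAtFilter _ _) hφcont.continuousAt
  -- Gronwall-type integral inequality
  have hineq : ∀ s ∈ Icc (0 : ℝ) t, φ s ≤ G + B * F s := by
    rintro s ⟨hs0, hst⟩
    rw [← hkey s ⟨hs0, hst⟩, hsplit s hs0]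
    have hbound : ∀ᵐ a ∂(volume.restrict (Ico (0 : ℝ) s)), u s a ≤ B * φ (s - a) := by
      filter_upwards [(hu s hs0).2.2.1, ae_restrict_mem measurableSet_Ico] with a ha hamem
      have hsa0 : 0 ≤ s - a := by linarith [hamem.2.le]
      have hsat : s - a ≤ t := by linarith [hamem.1]
      rw [ha]
      calc C (s - a) (densMeasure (u (s - a))) * ∫ z in Ici (0 : ℝ), u (s - a) z * τ z
          ≤ 1 * ∫ z in Ici (0 : ℝ), u (s - a) z * τ z :=
            mul_le_mul_of_nonneg_right (hC01 _ _).2 (hh_nonneg _ hsa0)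
        _ = ∫ z in Ici (0 : ℝ), u (s - a) z * τ z := one_mul _
        _ ≤ B * L1norm (u (s - a)) := hh_le _ hsa0
        _ = B * φ (s - a) := by rw [hkey (s - a) ⟨hsa0, hsat⟩]
    have hRHSint : IntegrableOn (fun a => B * φ (s - a)) (Ico 0 s) volume := by
      refine IntegrableOn.mono_set ?_ Ico_subset_Icc_self
      exact (Continuous.integrableOn_Icc
        ((continuous_const.mul (hφcont.comp (continuous_const.sub continuous_id)))))
    have h2 : (∫ a in Ico 0 s, u s a) ≤ ∫ a in Ico 0 s, B * φ (s - a) := by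
      refine integral_mono_ae ?_ hRHSint hbound
      exact IntegrableOn.mono_set (hu s hs0).1 Ico_subset_Ici_self
    have h3 : ∫ a in Ico 0 s, B * φ (s - a) = B * F s := by
      rw [integral_const_mul]
      congr 1
      rw [integral_Ico_eq_integral_Ioo, ← integral_Ioc_eq_integral_Ioo,
        ← intervalIntegral.integral_of_le hs0]
      have h6 := intervalIntegral.integral_comp_sub_left (a := (0:ℝ)) (b := s) φ s
      rw [sub_self, sub_zero] at h6
      exact h6
    linarith [h2, h3.le, h3.ge]
  -- apply Gronwall
  have hg' : ∀ x ∈ Ico (0 : ℝ) t, HasDerivWithinAt F (φ x) (Ici x) x :=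
    fun x _ => (hFderiv x).hasDerivWithinAt
  have hFcont : ContinuousOn F (Icc 0 t) :=
    fun x _ => (hFderiv x).continuousAt.continuousWithinAt
  have hF0 : ‖F 0‖ ≤ 0 := by
    simp [hFdef]
  have hbound' : ∀ x ∈ Ico (0 : ℝ) t, ‖φ x‖ ≤ B * ‖F x‖ + G := by
    intro x hx
    have hxI : x ∈ Icc (0 : ℝ) t := ⟨hx.1, hx.2.le⟩
    have hFx : 0 ≤ F x :=
      intervalIntegral.integral_nonneg hx.1 fun r hr =>
        hφnonneg r ⟨hr.1, hr.2.trans hx.2.le⟩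
    rw [Real.norm_of_nonneg (hφnonneg x hxI), Real.norm_of_nonneg hFx]
    linarith [hineq x hxI]
  have hgron := norm_le_gronwallBound_of_norm_deriv_right_le hFcont hg' hF0 hbound'
    t ⟨ht, le_refl t⟩
  rw [sub_zero] at hgron
  have hFt : F t ≤ gronwallBound 0 B G t :=
    (le_abs_self _).trans (by rwa [Real.norm_eq_abs] at hgron)
  have hfin1 : L1norm (u t) ≤ G + B * gronwallBound 0 B G t := by
    rw [hkey t ⟨ht, le_refl t⟩]
    calc φ t ≤ G + B * F t := hineq t ⟨ht, le_refl t⟩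
      _ ≤ G + B * gronwallBound 0 B G t := by
          have := mul_le_mul_of_nonneg_left hFt hB
          linarith
  refine hfin1.trans ?_
  rcases eq_or_lt_of_le hB with hB0 | hBpos
  · rw [← hB0]
    simp [gronwallBound_K0]
  · rw [gronwallBound_of_K_ne_0 hBpos.ne']
    have hexp : Real.exp (B * t) - 1 ≥ 0 := by
      have : (1 : ℝ) ≤ Real.exp (B * t) := Real.one_le_exp (mul_nonneg hB ht)
      linarith
    have heq : G + B * (0 * Real.exp (B * t) + G / B * (Real.exp (B * t) - 1))
        = G * Real.exp (B * t) := by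
      field_simp
      ring
    linarith [heq.le, heq.ge]
end

section
/- Every solution (u_t)_{t≥0} of the nonlinear renewal equation with nonnegative initial condition g ∈ L¹([0,∞)) satisfies the mass identity ‖u_t‖₁ = ‖g‖₁ + ∫₀^t C(s, u_s)·(∫₀^∞ u_s(a) τ(a) da) ds for every t ≥ 0. -/
open MeasureTheory Set Filter

/-- Mass identity: every solution of the nonlinear renewal equation with
nonnegative initial condition `g ∈ L¹([0,∞))` satisfies
`‖u_t‖₁ = ‖g‖₁ + ∫₀^t C(s, u_s)·(∫₀^∞ u_s(a) τ(a) da) ds` for every `t ≥ 0`. -/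
theorem renewal_solution_mass_identity
    (τ : ℝ → ℝ) (hτmeas : Measurable τ) (hτnonneg : ∀ a, 0 ≤ τ a)
    (hτbdd : ∃ B : ℝ, ∀ᵐ a ∂(volume.restrict (Ici (0 : ℝ))), τ a ≤ B)
    (C : ℝ → Measure ℝ → ℝ)
    (hC01 : ∀ t μ, C t μ ∈ Icc (0 : ℝ) 1)
    (hCcont : ProkhorovContinuous C)
    (g : ℝ → ℝ) (hg : Integrable g (volume.restrict (Ici 0)))
    (hgnonneg : ∀ᵐ a ∂(volume.restrict (Ici (0 : ℝ))), 0 ≤ g a)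
    (u : ℝ → ℝ → ℝ) (hu : IsRenewalSolutionOn τ C g u (Ici 0)) :
    ∀ t ≥ (0 : ℝ),
      L1norm (u t) =
        L1norm g +
          ∫ s in Icc (0 : ℝ) t,
            C s (densMeasure (u s)) * ∫ a in Ici (0 : ℝ), u s a * τ a := by

  intro t ht
  obtain ⟨hint, hnn, heq, hinit⟩ := hu t (mem_Ici.mpr ht)
  set F : ℝ → ℝ := fun s => C s (densMeasure (u s)) * ∫ a in Ici (0 : ℝ), u s a * τ a with hF
  -- L1norm (u t) = ∫_{Ici 0} u t
  have habs : L1norm (u t) = ∫ a in Ici (0 : ℝ), u t a := by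
    unfold L1norm
    refine integral_congr_ae ?_
    filter_upwards [hnn] with a ha using abs_of_nonneg ha
  have hgabs : L1norm g = ∫ a in Ici (0 : ℝ), g a := by
    unfold L1norm
    refine integral_congr_ae ?_
    filter_upwards [hgnonneg] with a ha using abs_of_nonneg ha
  have hsub1 : Ico (0 : ℝ) t ⊆ Ici 0 := Ico_subset_Ici_self
  have hsub2 : Ici t ⊆ Ici (0 : ℝ) := Ici_subset_Ici.mpr ht
  have hdisj : Disjoint (Ico (0 : ℝ) t) (Ici t) := by
    rw [Set.disjoint_left]
    intro a ha ha'
    exact absurd (mem_Ici.mp ha') (not_le.mpr ha.2)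
  have hsplit : ∫ a in Ici (0 : ℝ), u t a
      = (∫ a in Ico (0 : ℝ) t, u t a) + ∫ a in Ici t, u t a := by
    rw [← setIntegral_union hdisj measurableSet_Ici (hint.mono_measure (Measure.restrict_mono hsub1 le_rfl))
      (hint.mono_measure (Measure.restrict_mono hsub2 le_rfl)), Ico_union_Ici_eq_Ici ht]
  -- tail part
  have htail : ∫ a in Ici t, u t a = ∫ a in Ici (0 : ℝ), g a := by
    rw [integral_congr_ae hinit]
    have h1 : ∫ a in Ici t, g (a - t)
        = ∫ a, Set.indicator (Ici (0 : ℝ)) g (a - t) := by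
      rw [← integral_indicator measurableSet_Ici]
      congr 1
      funext a
      by_cases h : a ∈ Ici t
      · rw [Set.indicator_of_mem h, Set.indicator_of_mem (by
          simpa [mem_Ici, sub_nonneg] using mem_Ici.mp h)]
      · rw [Set.indicator_of_notMem h, Set.indicator_of_notMem (by
          simp only [mem_Ici, not_le] at h ⊢
          linarith)]
    rw [h1, integral_sub_right_eq_self (Set.indicator (Ici (0 : ℝ)) g) t,
      integral_indicator measurableSet_Ici]
  -- bulk part
  have hbulk : ∫ a in Ico (0 : ℝ) t, u t a = ∫ s in Icc (0 : ℝ) t, F s := by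
    rw [integral_congr_ae heq]
    have h1 : ∫ a in Ico (0 : ℝ) t, F (t - a)
        = ∫ a, Set.indicator (Ioc (0 : ℝ) t) F (t - a) := by
      rw [← integral_indicator measurableSet_Ico]
      congr 1
      funext a
      by_cases h : a ∈ Ico (0 : ℝ) t
      · rw [Set.indicator_of_mem h, Set.indicator_of_mem (by
          obtain ⟨h1, h2⟩ := h
          exact ⟨by linarith, by linarith⟩)]
      · rw [Set.indicator_of_notMem h, Set.indicator_of_notMem (by
          simp only [mem_Ico, not_and_or, not_le, not_lt] at h
          simp only [mem_Ioc, not_and_or, not_le, not_lt]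
          rcases h with h | h
          · right; linarith
          · left; linarith)]
    calc ∫ a in Ico (0 : ℝ) t, F (t - a)
        = ∫ a, Set.indicator (Ioc (0 : ℝ) t) F (t - a) := h1
      _ = ∫ a, Set.indicator (Ioc (0 : ℝ) t) F a :=
          integral_sub_left_eq_self (Set.indicator (Ioc (0 : ℝ) t) F) volume t
      _ = ∫ s in Ioc (0 : ℝ) t, F s := integral_indicator measurableSet_Ioc
      _ = ∫ s in Icc (0 : ℝ) t, F s := (integral_Icc_eq_integral_Ioc).symm
  rw [habs, hsplit, htail, hbulk, hgabs]
  ring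
end

section
/- Let (Ω, F, (F_n)_{n≥0}, P) be a filtered probability space, let η, L, m, K, ε > 0 and let N ≥ 1 be an integer. Let (S_n)_{n≥0} be a sequence of nonnegative integrable random variables adapted to (F_n) with S_0 = 0 and E[S_{n+1} | F_n] ≤ S_n + m·min(1, η + (L/N)·S_n) almost surely for every n ≥ 0. Then for every integer n with n ≤ K·N, P(S_n ≥ εN) ≤ (η/(Lε))·(e^{K·L·m} − 1). -/
open MeasureTheory Set Filter

/-- Tail bound for the self-exciting counting chain: if
`(S_n)_{n ≥ 0}` is a nonnegative integrable adapted sequence with `S_0 = 0` and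
`E[S_{n+1} | F_n] ≤ S_n + m·min(1, η + (L/N)·S_n)` a.s. for every `n`, then for every
`n ≤ K·N`, `P(S_n ≥ εN) ≤ (η/(Lε))·(e^{KLm} − 1)`. -/
theorem selfexciting_chain_tail_bound
    {Ω : Type*} {m0 : MeasurableSpace Ω} (P : Measure Ω) [IsProbabilityMeasure P]
    (ℱ : Filtration ℕ m0)
    (η L m K ε : ℝ) (hη : 0 < η) (hL : 0 < L) (hm : 0 < m) (hK : 0 < K) (hε : 0 < ε)
    (N : ℕ) (hN : 1 ≤ N)
    (S : ℕ → Ω → ℝ)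
    (hadapted : Adapted ℱ S)
    (hint : ∀ n, Integrable (S n) P)
    (hnonneg : ∀ n, ∀ᵐ ω ∂P, 0 ≤ S n ω)
    (hzero : ∀ᵐ ω ∂P, S 0 ω = 0)
    (hrec : ∀ n, ∀ᵐ ω ∂P,
      (P[S (n + 1) | ℱ n]) ω ≤ S n ω + m * min 1 (η + L / (N : ℝ) * S n ω)) :
    ∀ n : ℕ, (n : ℝ) ≤ K * (N : ℝ) →
      P {ω | ε * (N : ℝ) ≤ S n ω} ≤
        ENNReal.ofReal (η / (L * ε) * (Real.exp (K * L * m) - 1)) := by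
  have hNp : (0:ℝ) < (N : ℝ) := by exact_mod_cast Nat.lt_of_lt_of_le Nat.zero_lt_one hN
  set a : ℝ := 1 + m * L / N with ha
  have ha1 : 1 ≤ a := by
    rw [ha]
    have : 0 ≤ m * L / N := by positivity
    linarith
  have ha0 : 0 < a := lt_of_lt_of_le one_pos ha1
  -- Step: recursion on expectations
  have hstep : ∀ n, ∫ ω, S (n+1) ω ∂P ≤ a * ∫ ω, S n ω ∂P + m * η := by
    intro n
    have h1 : ∫ ω, S (n+1) ω ∂P = ∫ ω, (P[S (n + 1) | ℱ n]) ω ∂P :=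
      (integral_condExp (ℱ.le n)).symm
    have hrhs : Integrable (fun ω => a * S n ω + m * η) P :=
      ((hint n).const_mul _).add (integrable_const _)
    have h2 : ∫ ω, (P[S (n + 1) | ℱ n]) ω ∂P ≤
        ∫ ω, a * S n ω + m * η ∂P := by
      refine integral_mono_ae (integrable_condExp) hrhs ?_
      filter_upwards [hrec n] with ω hω
      have hmin : min 1 (η + L / (N : ℝ) * S n ω) ≤ η + L / (N : ℝ) * S n ω :=
        min_le_right _ _
      have h4 : S n ω + m * min 1 (η + L / (N : ℝ) * S n ω) ≤
          S n ω + m * (η + L / (N : ℝ) * S n ω) := by nlinarith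
      have h5 : S n ω + m * (η + L / (N : ℝ) * S n ω) = a * S n ω + m * η := by
        rw [ha]; ring
      calc (P[S (n + 1) | ℱ n]) ω ≤ _ := hω
        _ ≤ S n ω + m * (η + L / (N : ℝ) * S n ω) := h4
        _ = a * S n ω + m * η := h5
    have h3 : ∫ ω, a * S n ω + m * η ∂P = a * ∫ ω, S n ω ∂P + m * η := by
      rw [integral_add ((hint n).const_mul _) (integrable_const _),
        integral_const_mul, integral_const]
      simp
    rw [h1]; rw [h3] at h2; exact h2
  -- Induction: expectation bound
  have hkey : η * N / L * (a - 1) = m * η := by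
    rw [ha]; field_simp; ring
  have hexp : ∀ n, ∫ ω, S n ω ∂P ≤ η * N / L * (a ^ n - 1) := by
    intro n
    induction n with
    | zero =>
        have : ∫ ω, S 0 ω ∂P = 0 := by
          rw [integral_eq_zero_iff_of_nonneg_ae (hnonneg 0) (hint 0)]
          exact hzero
        simp [this]
    | succ n ih =>
        have h6 := mul_le_mul_of_nonneg_left ih ha0.le
        have h7 : a * (η * N / L * (a ^ n - 1)) + m * η
            = η * N / L * (a ^ (n+1) - 1) := by
          linear_combination -hkey
        calc ∫ ω, S (n+1) ω ∂P ≤ a * ∫ ω, S n ω ∂P + m * η := hstep n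
          _ ≤ a * (η * N / L * (a ^ n - 1)) + m * η := by linarith
          _ = η * N / L * (a ^ (n+1) - 1) := h7
  intro n hn
  -- bound a^n by exp(K L m)
  have hpow : a ^ n ≤ Real.exp (K * L * m) := by
    have h1 : a ≤ Real.exp (m * L / N) := by
      have := Real.add_one_le_exp (m * L / N)
      rw [ha]; linarith
    have h2 : a ^ n ≤ Real.exp (m * L / N) ^ n :=
      pow_le_pow_left₀ ha0.le h1 n
    rw [← Real.exp_nat_mul] at h2
    refine h2.trans (Real.exp_le_exp.2 ?_)
    have heq : (n : ℝ) * (m * L / N) = (n : ℝ) / N * (m * L) := by ring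
    have hnN : (n : ℝ) / N ≤ K := by
      rw [div_le_iff₀ hNp]; linarith
    rw [heq]
    nlinarith [mul_le_mul_of_nonneg_right hnN (mul_nonneg hm.le hL.le)]
  -- Markov
  have hmark := mul_meas_ge_le_integral_of_nonneg (hnonneg n) (hint n) (ε * N)
  have hfin : P {ω | ε * (N : ℝ) ≤ S n ω} ≠ ⊤ := measure_ne_top _ _
  have htoReal : (P {ω | ε * (N : ℝ) ≤ S n ω}).toReal ≤
      η / (L * ε) * (Real.exp (K * L * m) - 1) := by
    have hI : ∫ ω, S n ω ∂P ≤ η * N / L * (Real.exp (K * L * m) - 1) := by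
      refine (hexp n).trans ?_
      have h8 : a ^ n - 1 ≤ Real.exp (K * L * m) - 1 := by linarith
      exact mul_le_mul_of_nonneg_left h8
        (div_nonneg (mul_nonneg hη.le hNp.le) hL.le)
    have hεN : (0:ℝ) < ε * N := by positivity
    have h9 : (P {ω | ε * (N : ℝ) ≤ S n ω}).toReal ≤
        η * N / L * (Real.exp (K * L * m) - 1) / (ε * N) :=
      (le_div_iff₀' hεN).mpr (hmark.trans hI)
    have h10 : η * N / L * (Real.exp (K * L * m) - 1) / (ε * N)
        = η / (L * ε) * (Real.exp (K * L * m) - 1) := by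
      field_simp
    rwa [h10] at h9
  calc P {ω | ε * (N : ℝ) ≤ S n ω}
      = ENNReal.ofReal (P {ω | ε * (N : ℝ) ≤ S n ω}).toReal :=
        (ENNReal.ofReal_toReal hfin).symm
    _ ≤ _ := ENNReal.ofReal_le_ofReal htoReal
end
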